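/- Let Y be a closed subspace of a Banach space X. Suppose the triplet (X**, B_{Y⊥⊥}, K(X)) has property-(P₁), i.e., for every nonempty compact F ⊆ X, cent_{B_{Y⊥⊥}}(F) ≠ ∅ and for every ε > 0 there is δ > 0 with cent_{B_{Y⊥⊥}}(F,δ) ⊆ cent_{B_{Y⊥⊥}}(F) + εB_{X**}. Then (X, B_Y, K(X)) has property-(P₁): for every nonempty compact F ⊆ X, cent_{B_Y}(F) ≠ ∅ and for every ε > 0 there is δ > 0 with cent_{B_Y}(F,δ) ⊆ cent_{B_Y}(F) + εB_X. -/

import Mathlib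

open Metric Set Pointwise

/-- `r(x,B) = sup_{b ∈ B} ‖x - b‖`. -/
noncomputable def chebR {X : Type*} [NormedAddCommGroup X] (x : X) (B : Set X) : ℝ :=
  ⨆ b : B, ‖x - (b : X)‖

/-- `rad_V(B) = inf_{v ∈ V} r(v,B)`, the restricted Chebyshev radius. -/
noncomputable def chebRad {X : Type*} [NormedAddCommGroup X] (V B : Set X) : ℝ :=
  ⨅ v : V, chebR (v : X) B

/-- `cent_V(B)`, the set of restricted Chebyshev centers of `B` w.r.t. `V`. -/
noncomputable def chebCent {X : Type*} [NormedAddCommGroup X] (V B : Set X) : Set X :=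
  {v ∈ V | chebR v B ≤ chebRad V B}

/-- `cent_V(B,δ) = {v ∈ V : r(v,B) ≤ rad_V(B) + δ}`. -/
noncomputable def chebCentA {X : Type*} [NormedAddCommGroup X] (V B : Set X) (δ : ℝ) : Set X :=
  {v ∈ V | chebR v B ≤ chebRad V B + δ}

/-- Property-(P₁) of `(Z,V,{F})`. -/
def propP1 {Z : Type*} [NormedAddCommGroup Z] [NormedSpace ℝ Z] (V F : Set Z) : Prop :=
  (chebCent V F).Nonempty ∧
    ∀ ε > (0 : ℝ), ∃ δ > (0 : ℝ), chebCentA V F δ ⊆ chebCent V F + ε • closedBall (0 : Z) 1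

open NormedSpace in
/-- The double annihilator `Y⊥⊥` of `Y`, as a subset of the bidual `X**`. -/
def biann {X : Type*} [NormedAddCommGroup X] [NormedSpace ℝ X] (Y : Submodule ℝ X) :
    Set (StrongDual ℝ (StrongDual ℝ X)) :=
  {Φ | ∀ f : StrongDual ℝ X, (∀ y ∈ Y, f y = 0) → Φ f = 0}

/-
The heart of the argument is a Helly-type lemma: if `Φ ∈ B_{Y⊥⊥}` lies within `rᵢ` of finitely
many points `xᵢ ∈ X`, then for every `ε > 0` some `y ∈ B_Y` lies within `rᵢ + ε` of every `xᵢ`.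
Otherwise the diagonal image of `B_Y` in `Xⁿ` is separated from the product of the open balls
`B(xᵢ, rᵢ + ε)` by a functional `w ↦ ∑ gᵢ (wᵢ)`, and evaluating `Φ` at `∑ gᵢ` contradicts the
separation. Covering a compact `F` by finitely many small balls, this gives
`rad_{B_Y}(F) = rad_{B_{Y⊥⊥}}(F)`, and lets a center of `F` in the bidual lying near an almost
center `z ∈ B_Y` be traded for points of `B_Y` near `z` that are arbitrarily close to being
centers. Iterating with geometrically decreasing tolerances and using the completeness of `B_Y`
produces an exact center near `z`.
-/

section ChebyshevRadius

variable {E : Type*} [NormedAddCommGroup E]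

lemma chebR_nonneg (v : E) (B : Set E) : 0 ≤ chebR v B :=
  Real.iSup_nonneg fun _ => norm_nonneg _

lemma chebR_le {v : E} {B : Set E} {c : ℝ} (hc : 0 ≤ c) (h : ∀ b ∈ B, ‖v - b‖ ≤ c) :
    chebR v B ≤ c :=
  Real.iSup_le (fun b => h b b.2) hc

lemma norm_sub_le_chebR {B : Set E} (hB : Bornology.IsBounded B) (v : E) {b : E} (hb : b ∈ B) :
    ‖v - b‖ ≤ chebR v B := by
  obtain ⟨M, hM⟩ := isBounded_iff_forall_norm_le.mp hB
  refine le_ciSup (f := fun c : B => ‖v - c‖) ⟨‖v‖ + M, ?_⟩ ⟨b, hb⟩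
  rintro _ ⟨c, rfl⟩
  exact (norm_sub_le _ _).trans (add_le_add_right (hM c c.2) _)

lemma lowerSemicontinuous_chebR {B : Set E} (hB : Bornology.IsBounded B) :
    LowerSemicontinuous fun v => chebR v B := by
  refine lowerSemicontinuous_ciSup (fun v => ?_) fun b =>
    (continuous_id.sub continuous_const).norm.lowerSemicontinuous
  exact ⟨chebR v B, by rintro _ ⟨b, rfl⟩; exact norm_sub_le_chebR hB v b.2⟩

lemma chebRad_le_chebR {V : Set E} (B : Set E) {v : E} (hv : v ∈ V) : chebRad V B ≤ chebR v B :=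
  ciInf_le ⟨0, by rintro _ ⟨w, rfl⟩; exact chebR_nonneg _ _⟩ (⟨v, hv⟩ : V)

lemma Isometry.chebR_image {F : Type*} [NormedAddCommGroup F] {e : E → F} (he : Isometry e) (v : E)
    (B : Set E) :
    chebR (e v) (e '' B) = chebR v B := by
  simp only [chebR, iSup]
  congr 1
  ext t
  simp [← dist_eq_norm, he.dist_eq]

end ChebyshevRadius

namespace ContinuousLinearMap

variable {E : Type*} [NormedAddCommGroup E] [NormedSpace ℝ E]

lemma exists_norm_lt_one_lt_apply (g : StrongDual ℝ E) {t : ℝ} (ht : t < ‖g‖) :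
    ∃ v, ‖v‖ < 1 ∧ t < g v := by
  obtain ⟨v, hv, hlt⟩ := g.exists_lt_apply_of_lt_opNorm ht
  rcases le_total 0 (g v) with h | h
  · exact ⟨v, hv, by rwa [Real.norm_of_nonneg h] at hlt⟩
  · exact ⟨-v, by rwa [norm_neg], by rwa [map_neg, ← Real.norm_of_nonpos h]⟩

lemma exists_norm_lt_mul_norm_le_apply (g : StrongDual ℝ E) {r ρ : ℝ} (hr : 0 ≤ r)
    (hrρ : r < ρ) : ∃ w, ‖w‖ < ρ ∧ r * ‖g‖ ≤ g w := by
  have hρ : 0 < ρ := hr.trans_lt hrρ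
  rcases (norm_nonneg g).eq_or_lt with hg | hg
  · exact ⟨0, by simpa using hρ, by simp [← hg]⟩
  obtain ⟨v, hv, hlt⟩ := g.exists_norm_lt_one_lt_apply (t := r / ρ * ‖g‖)
    (mul_lt_of_lt_one_left hg ((div_lt_one hρ).2 hrρ))
  refine ⟨ρ • v, ?_, ?_⟩
  · rw [norm_smul, Real.norm_of_nonneg hρ.le]
    exact mul_lt_of_lt_one_right hρ hv
  · rw [map_smul, smul_eq_mul]
    calc r * ‖g‖ = ρ * (r / ρ * ‖g‖) := by field_simp
      _ ≤ ρ * g v := mul_le_mul_of_nonneg_left hlt.le hρ.le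

lemma norm_le_neg_of_forall_le_apply (g : StrongDual ℝ E) {u : ℝ}
    (h : ∀ v, ‖v‖ ≤ 1 → u ≤ g v) : ‖g‖ ≤ -u := by
  by_contra! hlt
  obtain ⟨v, hv, hgv⟩ := (-g).exists_norm_lt_one_lt_apply (t := -u) (by rwa [norm_neg])
  have := h v hv.le
  simp only [neg_apply] at hgv
  linarith

end ContinuousLinearMap

open Filter Topology in
lemma IsComplete.exists_le_dist_le_of_forall_approx {E : Type*} [PseudoMetricSpace E] {V : Set E}
    (hV : IsComplete V) {φ : E → ℝ} (hφ : LowerSemicontinuous φ) {m : ℝ}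
    (h : ∀ η > 0, ∃ δ > 0, ∀ z ∈ V, φ z ≤ m + δ → ∀ μ > 0, ∃ y ∈ V, φ y ≤ m + μ ∧ dist y z ≤ η)
    {θ : ℝ} (hθ : 0 < θ) :
    ∃ δ > 0, ∀ z ∈ V, φ z ≤ m + δ → ∃ y ∈ V, φ y ≤ m ∧ dist z y ≤ θ := by
  choose δ hδ hstep using fun n : ℕ => h (θ / 2 / 2 ^ n) (by positivity)
  -- capping the tolerances by `1 / (n + 1)` forces `φ` down to `m` along the sequence
  set δ' : ℕ → ℝ := fun n => min (δ n) (1 / (n + 1))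
  have hδ' : ∀ n, 0 < δ' n := fun n => lt_min (hδ n) Nat.one_div_pos_of_nat
  have hnext : ∀ n z, z ∈ V ∧ φ z ≤ m + δ' n →
      ∃ y, (y ∈ V ∧ φ y ≤ m + δ' (n + 1)) ∧ dist z y ≤ θ / 2 / 2 ^ n := fun n z hz => by
    obtain ⟨y, hy, hφy, hyz⟩ :=
      hstep n z hz.1 (hz.2.trans (by gcongr; exact min_le_left _ _)) _ (hδ' (n + 1))
    exact ⟨y, ⟨hy, hφy⟩, dist_comm z y ▸ hyz⟩
  choose! next hnext using hnext
  refine ⟨δ' 0, hδ' 0, fun z hz hφz => ?_⟩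
  let s : ℕ → E := fun n => Nat.rec z (fun k x => next k x) n
  have hs : ∀ n, s n ∈ V ∧ φ (s n) ≤ m + δ' n := fun n => by
    induction n with
    | zero => exact ⟨hz, hφz⟩
    | succ n ih => exact (hnext n (s n) ih).1
  have hdist : ∀ n, dist (s n) (s (n + 1)) ≤ θ / 2 / 2 ^ n := fun n => (hnext n (s n) (hs n)).2
  obtain ⟨y, hy, hlim⟩ := cauchySeq_tendsto_of_isComplete hV (fun n => (hs n).1)
    (cauchySeq_of_le_geometric_two hdist)
  refine ⟨y, hy, le_of_forall_pos_le_add fun c hc => ?_,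
    dist_le_of_le_geometric_two_of_tendsto₀ hdist hlim⟩
  refine (hφ.isClosed_preimage (m + c)).mem_of_tendsto hlim ?_
  filter_upwards [tendsto_one_div_add_atTop_nhds_zero_nat.eventually (ge_mem_nhds hc)] with n hn
  exact (hs n).2.trans (by gcongr; exact (min_le_right _ _).trans hn)

section PropP1

variable {Z : Type*} [NormedAddCommGroup Z] [NormedSpace ℝ Z]

lemma propP1_of_forall_exists_dist_le {V F : Set Z} (hV : V.Nonempty)
    (h : ∀ θ > 0, ∃ δ > 0, ∀ z ∈ V, chebR z F ≤ chebRad V F + δ →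
      ∃ y ∈ V, chebR y F ≤ chebRad V F ∧ dist z y ≤ θ) :
    propP1 V F := by
  refine ⟨?_, fun ε hε => ?_⟩
  · have : Nonempty V := hV.to_subtype
    obtain ⟨δ, hδ, hδc⟩ := h 1 one_pos
    obtain ⟨⟨z, hz⟩, hzF⟩ := exists_lt_of_ciInf_lt (lt_add_of_pos_right (chebRad V F) hδ)
    obtain ⟨y, hy, hyF, -⟩ := hδc z hz hzF.le
    exact ⟨y, hy, hyF⟩
  · obtain ⟨δ, hδ, hδc⟩ := h ε hε
    refine ⟨δ, hδ, fun z ⟨hz, hzF⟩ => ?_⟩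
    obtain ⟨y, hy, hyF, hzy⟩ := hδc z hz hzF
    rw [smul_unitClosedBall_of_nonneg hε.le]
    exact ⟨y, ⟨hy, hyF⟩, z - y, mem_closedBall_zero_iff.2 (dist_eq_norm z y ▸ hzy),
      add_sub_cancel y z⟩

end PropP1

section Bidual

open NormedSpace

lemma isometry_inclusionInDoubleDual (𝕜 : Type*) {E : Type*} [RCLike 𝕜] [NormedAddCommGroup E]
    [NormedSpace 𝕜 E] : Isometry (inclusionInDoubleDual 𝕜 E) :=
  (inclusionInDoubleDualLi 𝕜).isometry

variable {X : Type*} [NormedAddCommGroup X] [NormedSpace ℝ X] (Y : Submodule ℝ X)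

lemma mapsTo_inclusionInDoubleDual_biann :
    MapsTo (inclusionInDoubleDual ℝ X) ((Y : Set X) ∩ closedBall 0 1)
      (biann Y ∩ closedBall 0 1) := fun y hy =>
  ⟨fun _ hf => hf y hy.1, (mem_closedBall_zero_iff (a := inclusionInDoubleDual ℝ X y)).2
    ((double_dual_bound ℝ X y).trans (mem_closedBall_zero_iff.1 hy.2))⟩

lemma le_apply_of_mem_biann {Φ : StrongDual ℝ (StrongDual ℝ X)} (hΦ : Φ ∈ biann Y)
    (hΦ1 : ‖Φ‖ ≤ 1) (g : StrongDual ℝ X) {u : ℝ} (h : ∀ y ∈ Y, ‖y‖ ≤ 1 → u ≤ g y) :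
    u ≤ Φ g := by
  obtain ⟨G, hGg, hG⟩ := exists_extension_norm_eq Y (g.comp Y.subtypeL)
  have hΦG : Φ g = Φ G := by
    rw [← sub_eq_zero, ← map_sub]
    exact hΦ _ fun y hy => by simp [hGg ⟨y, hy⟩]
  have hGu : ‖G‖ ≤ -u := hG ▸ (g.comp Y.subtypeL).norm_le_neg_of_forall_le_apply
    fun y hy => h y y.2 hy
  calc u ≤ -‖G‖ := by linarith
    _ ≤ -(‖Φ‖ * ‖G‖) := by gcongr; exact mul_le_of_le_one_left (norm_nonneg _) hΦ1
    _ ≤ -‖Φ G‖ := neg_le_neg (Φ.le_opNorm G)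
    _ ≤ Φ g := hΦG ▸ neg_abs_le _

lemma exists_mem_norm_sub_lt_of_mem_biann {Φ : StrongDual ℝ (StrongDual ℝ X)}
    (hΦ : Φ ∈ biann Y) (hΦ1 : ‖Φ‖ ≤ 1) {ι : Type*} [Fintype ι] (x : ι → X) {ε : ℝ}
    (hε : 0 < ε) :
    ∃ y ∈ Y, ‖y‖ ≤ 1 ∧ ∀ i, ‖y - x i‖ < ‖Φ - inclusionInDoubleDual ℝ X (x i)‖ + ε := by
  classical
  by_contra! h
  set r : ι → ℝ := fun i => ‖Φ - inclusionInDoubleDual ℝ X (x i)‖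
  let D : X →ₗ[ℝ] (ι → X) := LinearMap.pi fun _ => LinearMap.id
  have hdisj : Disjoint (univ.pi fun i => ball (x i) (r i + ε))
      (D '' ((Y : Set X) ∩ closedBall 0 1)) := by
    rw [Set.disjoint_left]
    rintro _ hU ⟨y, ⟨hy, hy1⟩, rfl⟩
    obtain ⟨i, hi⟩ := h y hy (mem_closedBall_zero_iff.1 hy1)
    exact (mem_ball_iff_norm.1 (hU i trivial)).not_ge hi
  obtain ⟨f, u, hfU, hfA⟩ := geometric_hahn_banach_open
    (convex_pi fun i _ => convex_ball _ _) (isOpen_set_pi finite_univ fun i _ => isOpen_ball)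
    ((Y.convex.inter (convex_closedBall 0 1)).linear_image D) hdisj
  set g : ι → StrongDual ℝ X := fun i => f.comp (ContinuousLinearMap.single ℝ (fun _ => X) i)
  have hf : ∀ w, f w = ∑ i, g i (w i) := fun w =>
    (ContinuousLinearMap.sum_comp_single ℝ (fun _ => X) f w).symm
  have hgu : u ≤ Φ (∑ i, g i) := by
    refine le_apply_of_mem_biann Y hΦ hΦ1 _ fun y hy hy1 => ?_
    simpa [hf, D] using hfA _ ⟨y, ⟨hy, mem_closedBall_zero_iff.2 hy1⟩, rfl⟩
  have hΦg : Φ (∑ i, g i) ≤ ∑ i, (g i (x i) + r i * ‖g i‖) := by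
    rw [map_sum]
    gcongr with i
    calc Φ (g i) = g i (x i) + (Φ - inclusionInDoubleDual ℝ X (x i)) (g i) := by simp
      _ ≤ g i (x i) + r i * ‖g i‖ := by
        gcongr
        exact (le_abs_self _).trans ((Φ - inclusionInDoubleDual ℝ X (x i)).le_opNorm (g i))
  choose w hw hgw using fun i =>
    (g i).exists_norm_lt_mul_norm_le_apply (norm_nonneg (Φ - inclusionInDoubleDual ℝ X (x i)))
      (lt_add_of_pos_right (r i) hε)
  have hfw : ∑ i, (g i (x i) + r i * ‖g i‖) ≤ f (x + w) := by
    rw [hf]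
    gcongr with i
    simpa using hgw i
  have := hfU (x + w) fun i _ => by simpa [mem_ball_iff_norm] using hw i
  linarith

lemma exists_mem_chebR_le_of_mem_biann {Φ : StrongDual ℝ (StrongDual ℝ X)}
    (hΦ : Φ ∈ biann Y) (hΦ1 : ‖Φ‖ ≤ 1) {F : Set X} (hF : IsCompact F) (z : X) {ε : ℝ}
    (hε : 0 < ε) :
    ∃ y ∈ (Y : Set X) ∩ closedBall 0 1,
      chebR y F ≤ chebR Φ (inclusionInDoubleDual ℝ X '' F) + ε ∧
        ‖y - z‖ ≤ ‖Φ - inclusionInDoubleDual ℝ X z‖ + ε := by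
  classical
  obtain ⟨t, htF, ht, hFt⟩ := finite_cover_balls_of_compact hF (half_pos hε)
  obtain ⟨y, hy, hy1, hyx⟩ := exists_mem_norm_sub_lt_of_mem_biann Y hΦ hΦ1
    (ι := ↥(insert z ht.toFinset)) Subtype.val (half_pos hε)
  refine ⟨y, ⟨hy, mem_closedBall_zero_iff.2 hy1⟩,
    chebR_le (add_nonneg (chebR_nonneg _ _) hε.le) fun b hb => ?_,
    (hyx ⟨z, by simp⟩).le.trans (by linarith)⟩
  obtain ⟨c, hct, hbc⟩ := mem_iUnion₂.1 (hFt hb)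
  have hyc := hyx ⟨c, by simp [hct]⟩
  have hΦc := norm_sub_le_chebR ((hF.image (inclusionInDoubleDual ℝ X).continuous).isBounded)
    Φ (mem_image_of_mem _ (htF hct))
  rw [mem_ball', dist_eq_norm] at hbc
  linarith [norm_sub_le_norm_sub_add_norm_sub y c b]

lemma chebRad_biann_eq {F : Set X} (hF : IsCompact F) :
    chebRad (biann Y ∩ closedBall 0 1) (inclusionInDoubleDual ℝ X '' F) =
      chebRad ((Y : Set X) ∩ closedBall 0 1) F := by
  apply le_antisymm
  · have : Nonempty ↥((Y : Set X) ∩ closedBall 0 1) := ⟨⟨0, Y.zero_mem, by simp⟩⟩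
    refine le_ciInf fun v => ?_
    rw [← (isometry_inclusionInDoubleDual ℝ).chebR_image]
    exact chebRad_le_chebR _ (mapsTo_inclusionInDoubleDual_biann Y v.2)
  · refine le_of_forall_pos_le_add fun ε hε => ?_
    have : Nonempty ↥(biann Y ∩ closedBall 0 1) := ⟨⟨0, fun _ _ => rfl, by simp⟩⟩
    obtain ⟨⟨Φ, hΦ, hΦ1⟩, hΦF⟩ := exists_lt_of_ciInf_lt
      (lt_add_of_pos_right (chebRad (biann Y ∩ closedBall 0 1) (inclusionInDoubleDual ℝ X '' F))
        (half_pos hε))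
    obtain ⟨y, hy, hyF, -⟩ := exists_mem_chebR_le_of_mem_biann Y hΦ
      ((mem_closedBall_zero_iff (a := Φ)).1 hΦ1) hF 0 (half_pos hε)
    linarith [chebRad_le_chebR F hy, hΦF.le]

lemma exists_chebR_le_dist_le_of_propP1_biann {F : Set X} (hF : IsCompact F)
    (hP : propP1 (biann Y ∩ closedBall 0 1) (inclusionInDoubleDual ℝ X '' F)) {η : ℝ}
    (hη : 0 < η) :
    ∃ δ > 0, ∀ z ∈ (Y : Set X) ∩ closedBall 0 1,
      chebR z F ≤ chebRad ((Y : Set X) ∩ closedBall 0 1) F + δ → ∀ μ > 0,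
        ∃ y ∈ (Y : Set X) ∩ closedBall 0 1,
          chebR y F ≤ chebRad ((Y : Set X) ∩ closedBall 0 1) F + μ ∧ dist y z ≤ η := by
  obtain ⟨δ, hδ, hsub⟩ := hP.2 (η / 2) (half_pos hη)
  refine ⟨δ, hδ, fun z hz hzF μ hμ => ?_⟩
  obtain ⟨Φ, ⟨⟨hΦ, hΦ1⟩, hΦF⟩, e, he, hΦe⟩ := hsub
    ⟨mapsTo_inclusionInDoubleDual_biann Y hz,
      by rwa [(isometry_inclusionInDoubleDual ℝ).chebR_image, chebRad_biann_eq Y hF]⟩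
  rw [smul_unitClosedBall_of_nonneg (half_pos hη).le, mem_closedBall_zero_iff (a := e)] at he
  beta_reduce at hΦe
  rw [chebRad_biann_eq Y hF] at hΦF
  obtain ⟨y, hy, hyF, hyz⟩ := exists_mem_chebR_le_of_mem_biann Y hΦ
    ((mem_closedBall_zero_iff (a := Φ)).1 hΦ1) hF z (lt_min hμ (half_pos hη))
  rw [← hΦe, sub_add_cancel_left, ContinuousLinearMap.opNorm_neg] at hyz
  refine ⟨y, hy, ?_, ?_⟩
  · linarith [min_le_left μ (η / 2)]
  · rw [dist_eq_norm]
    linarith [min_le_right μ (η / 2)]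

end Bidual

open NormedSpace in
/-- if `(X**, B_{Y⊥⊥}, K(X))` has property-(P₁) then so does `(X, B_Y, K(X))`. -/
theorem stmt_10 {X : Type*} [NormedAddCommGroup X] [NormedSpace ℝ X] [CompleteSpace X]
    (Y : Submodule ℝ X) (hYc : IsClosed (Y : Set X))
    (hP1 : ∀ F : Set X, F.Nonempty → IsCompact F →
      propP1 (biann Y ∩ closedBall 0 1) (inclusionInDoubleDual ℝ X '' F)) :
    ∀ F : Set X, F.Nonempty → IsCompact F →
      propP1 ((Y : Set X) ∩ closedBall 0 1) F := by
  intro F hF hFc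
  have hV : IsComplete ((Y : Set X) ∩ closedBall 0 1) := (hYc.inter isClosed_closedBall).isComplete
  refine propP1_of_forall_exists_dist_le ⟨0, Y.zero_mem, by simp⟩ fun θ hθ => ?_
  exact hV.exists_le_dist_le_of_forall_approx (lowerSemicontinuous_chebR hFc.isBounded)
    (fun η hη => exists_chebR_le_dist_le_of_propP1_biann Y hFc (hP1 F hF hFc) hη) hθ
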